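/- Along the vertical Hamiltonian flow ḣ1 = -h2h3, ḣ2 = h1h3, ḣ3 = h1h4 + h2h5, ḣ4 = h1h6 + h2h7, ḣ5 = h1h7 + h2h8, ḣ6 = ḣ7 = ḣ8 = 0, the functions H = (h1²+h2²)/2 and C = h5²h6 - 2h4h5h7 + h4²h8 - 2h3(h6h8-h7²) are constants of motion: for any solution h(t) of the ODE, (d/dt)H(h(t)) = 0 and (d/dt)C(h(t)) = 0. -/

import Mathlib

noncomputable section

/-- H = (h1² + h2²)/2 (0-based indexing: h i = h_{i+1}). -/
noncomputable def Ham (h : Fin 8 → ℝ) : ℝ := ((h 0)^2 + (h 1)^2) / 2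

/-- C = h5²h6 − 2h4h5h7 + h4²h8 − 2h3(h6h8 − h7²). -/
noncomputable def Cas (h : Fin 8 → ℝ) : ℝ :=
  (h 4)^2 * h 5 - 2 * h 3 * h 4 * h 6 + (h 3)^2 * h 7
    - 2 * h 2 * (h 5 * h 7 - (h 6)^2)

def vertField (x : Fin 8 → ℝ) : Fin 8 → ℝ :=
  ![-(x 1 * x 2), x 0 * x 2, x 0 * x 3 + x 1 * x 4, x 0 * x 5 + x 1 * x 6,
    x 0 * x 6 + x 1 * x 7, 0, 0, 0]

section ChainRule

variable {h : ℝ → Fin 8 → ℝ} {v : Fin 8 → ℝ} {t : ℝ}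

theorem hasDerivAt_ham (hh : HasDerivAt h v t) :
    HasDerivAt (fun s => Ham (h s)) (h t 0 * v 0 + h t 1 * v 1) t := by
  have hc := hasDerivAt_pi.mp hh
  refine ((((hc 0).fun_pow 2).add ((hc 1).fun_pow 2)).div_const 2).congr_deriv ?_
  simp only [Nat.cast_ofNat]
  ring

theorem hasDerivAt_cas (hh : HasDerivAt h v t) :
    HasDerivAt (fun s => Cas (h s))
      (-2 * (h t 5 * h t 7 - h t 6 ^ 2) * v 2 + 2 * (h t 3 * h t 7 - h t 4 * h t 6) * v 3
        + 2 * (h t 4 * h t 5 - h t 3 * h t 6) * v 4 + (h t 4 ^ 2 - 2 * h t 2 * h t 7) * v 5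
        + 2 * (2 * h t 2 * h t 6 - h t 3 * h t 4) * v 6 + (h t 3 ^ 2 - 2 * h t 2 * h t 5) * v 7) t := by
  have hc := hasDerivAt_pi.mp hh
  refine ((((((hc 4).fun_pow 2).mul (hc 5)).sub ((((hc 3).const_mul 2).mul (hc 4)).mul (hc 6))).add
      (((hc 3).fun_pow 2).mul (hc 7))).sub
      (((hc 2).const_mul 2).mul (((hc 5).mul (hc 7)).sub ((hc 6).fun_pow 2)))).congr_deriv ?_
  simp only [Nat.cast_ofNat, Pi.mul_apply, Pi.sub_apply]
  ring

end ChainRule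

theorem hasDerivAt_vertField_of_components {h : ℝ → Fin 8 → ℝ} {t : ℝ}
    (h1' : HasDerivAt (fun s => h s 0) (-(h t 1 * h t 2)) t)
    (h2' : HasDerivAt (fun s => h s 1) (h t 0 * h t 2) t)
    (h3' : HasDerivAt (fun s => h s 2) (h t 0 * h t 3 + h t 1 * h t 4) t)
    (h4' : HasDerivAt (fun s => h s 3) (h t 0 * h t 5 + h t 1 * h t 6) t)
    (h5' : HasDerivAt (fun s => h s 4) (h t 0 * h t 6 + h t 1 * h t 7) t)
    (h6' : HasDerivAt (fun s => h s 5) 0 t)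
    (h7' : HasDerivAt (fun s => h s 6) 0 t)
    (h8' : HasDerivAt (fun s => h s 7) 0 t) :
    HasDerivAt h (vertField (h t)) t := by
  refine hasDerivAt_pi.mpr fun i => ?_
  fin_cases i <;> assumption

theorem conservation (h : ℝ → Fin 8 → ℝ)
    (h1' : ∀ t, HasDerivAt (fun s => h s 0) (-(h t 1 * h t 2)) t)
    (h2' : ∀ t, HasDerivAt (fun s => h s 1) (h t 0 * h t 2) t)
    (h3' : ∀ t, HasDerivAt (fun s => h s 2) (h t 0 * h t 3 + h t 1 * h t 4) t)
    (h4' : ∀ t, HasDerivAt (fun s => h s 3) (h t 0 * h t 5 + h t 1 * h t 6) t)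
    (h5' : ∀ t, HasDerivAt (fun s => h s 4) (h t 0 * h t 6 + h t 1 * h t 7) t)
    (h6' : ∀ t, HasDerivAt (fun s => h s 5) 0 t)
    (h7' : ∀ t, HasDerivAt (fun s => h s 6) 0 t)
    (h8' : ∀ t, HasDerivAt (fun s => h s 7) 0 t) :
    (∀ t, HasDerivAt (fun s => Ham (h s)) 0 t) ∧
    (∀ t, HasDerivAt (fun s => Cas (h s)) 0 t) := by
  have hflow (t : ℝ) : HasDerivAt h (vertField (h t)) t :=
    hasDerivAt_vertField_of_components (h1' t) (h2' t) (h3' t) (h4' t) (h5' t) (h6' t)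
      (h7' t) (h8' t)
  refine ⟨fun t => (hasDerivAt_ham (hflow t)).congr_deriv ?_,
    fun t => (hasDerivAt_cas (hflow t)).congr_deriv ?_⟩
  all_goals
    simp only [vertField, Matrix.cons_val]
    ring

end
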